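/- Assume λ_i > 0 for every i. Fix any ε with 0 < ε < n/r_0, and define k_l = max{ k ≥ 0 : k + ε·r_k ≤ n } and k_u = min{ k ≥ 0 : k + r_k ≥ (1 + ε^{−1})·n } (both are well-defined and finite). Then E_0 ≤ (1 + ε)² · max_{k_l ≤ k < k_u} ( λ_{k+1}/λ_{k+2} + (1/ε) · (k+1)/(r_k − 1) ), where a term with r_k ≤ 1 is interpreted as +∞. -/

import Mathlib

/-!
Indexing from 0 as `lam` does, write `L_i = λ_i/(λ_i+κ₀)` and `T_m = Σ_{i≥m} λ_i`. Since
`L_i ≤ 1` and `L_i ≤ λ_i/κ₀`, splitting `n = Σ L_i` at any `m` gives `n ≤ m + T_m/κ₀`. Let `k`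
be the last index with `λ_k ≥ εκ₀`. At `m = kl` the bound forces `λ_kl ≥ εκ₀`, so `kl ≤ k`.
For `i ≤ k` we have `L_i ≥ ε/(1+ε)`, whence `k + r_k < (1+ε⁻¹)n`; as `j + r_j` is nondecreasing,
`k < ku`. Finally `n - Σ L_i² = Σ λ_iκ₀/(λ_i+κ₀)² ≥ κ₀T_{k+1}/(λ_{k+1}+κ₀)²` together with
`n ≤ k+1 + T_{k+1}/κ₀` and `λ_{k+1} < εκ₀ ≤ λ_k` bounds `E_0` by `(1+ε)²` times the `k`-th
term of the maximum.
-/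

open Filter Finset

theorem exists_le_and_lt_succ_of_eventually_lt {α : Type*} [LinearOrder α] {u : ℕ → α} {a : ℕ}
    {c : α} (ha : c ≤ u a) (hev : ∀ᶠ j in atTop, u j < c) :
    ∃ k, a ≤ k ∧ c ≤ u k ∧ u (k + 1) < c := by
  by_contra! h
  have hge : ∀ k, a ≤ k → c ≤ u k := fun k hk =>
    Nat.le_induction ha (fun k hk ih => h k hk ih) k hk
  obtain ⟨j, hj, haj⟩ := (hev.and (eventually_ge_atTop a)).exists
  exact (hge j haj).not_gt hj

noncomputable def tailSum (f : ℕ → ℝ) (j : ℕ) : ℝ := ∑' i, f (j + i)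

noncomputable def effRank (f : ℕ → ℝ) (j : ℕ) : ℝ := tailSum f j / f j

section TailSum

variable {f : ℕ → ℝ}

theorem Summable.nat_add_left (hf : Summable f) (j : ℕ) : Summable fun i => f (j + i) :=
  hf.comp_injective (add_right_injective j)

theorem sum_range_add_tailSum (hf : Summable f) (m : ℕ) :
    ∑ i ∈ range m, f i + tailSum f m = ∑' i, f i := by
  simpa only [tailSum, add_comm m] using hf.sum_add_tsum_nat_add m

theorem tailSum_eq_add_tailSum_succ (hf : Summable f) (j : ℕ) :
    tailSum f j = f j + tailSum f (j + 1) := by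
  simp only [tailSum, (hf.nat_add_left j).tsum_eq_zero_add, add_zero, add_assoc, add_comm 1]

theorem tailSum_pos (hpos : ∀ i, 0 < f i) (hf : Summable f) (j : ℕ) : 0 < tailSum f j :=
  (hf.nat_add_left j).tsum_pos (fun _ => (hpos _).le) 0 (hpos _)

theorem effRank_sub_one (hf : Summable f) {j : ℕ} (hj : f j ≠ 0) :
    effRank f j - 1 = tailSum f (j + 1) / f j := by
  rw [effRank, tailSum_eq_add_tailSum_succ hf j, add_div, div_self hj, add_sub_cancel_left]

theorem monotone_natCast_add_effRank (hpos : ∀ i, 0 < f i) (hanti : Antitone f)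
    (hf : Summable f) : Monotone fun j : ℕ => (j : ℝ) + effRank f j := by
  refine monotone_nat_of_le_succ fun j => ?_
  have hdrop : tailSum f (j + 1) / f j ≤ tailSum f (j + 1) / f (j + 1) :=
    div_le_div_of_nonneg_left (tailSum_pos hpos hf _).le (hpos _) (hanti j.le_succ)
  have hstep := effRank_sub_one hf (hpos j).ne'
  simp only [effRank, Nat.cast_succ] at hstep ⊢
  linarith

theorem tsum_le_natCast_add_tailSum {g : ℕ → ℝ} (hf : Summable f) (hg : Summable g)
    (hf_le_one : ∀ i, f i ≤ 1) (hfg : ∀ i, f i ≤ g i) (m : ℕ) :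
    ∑' i, f i ≤ m + tailSum g m := by
  rw [← sum_range_add_tailSum hf m]
  have head : ∑ i ∈ range m, f i ≤ m := by
    simpa using sum_le_sum fun i (_ : i ∈ range m) => hf_le_one i
  have tail : tailSum f m ≤ tailSum g m :=
    (hf.nat_add_left m).tsum_le_tsum (fun _ => hfg _) (hg.nat_add_left m)
  linarith

end TailSum

noncomputable def learnability (lam : ℕ → ℝ) (κ : ℝ) (i : ℕ) : ℝ := lam i / (lam i + κ)

section Learnability

variable {lam : ℕ → ℝ} {κ : ℝ}

theorem learnability_pos (hpos : ∀ i, 0 < lam i) (hκ : 0 < κ) (i : ℕ) :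
    0 < learnability lam κ i :=
  div_pos (hpos i) (add_pos (hpos i) hκ)

theorem learnability_le_one (hpos : ∀ i, 0 < lam i) (hκ : 0 < κ) (i : ℕ) :
    learnability lam κ i ≤ 1 :=
  div_le_one_of_le₀ (le_add_of_nonneg_right hκ.le) (add_pos (hpos i) hκ).le

theorem learnability_le_div (hpos : ∀ i, 0 < lam i) (hκ : 0 < κ) (i : ℕ) :
    learnability lam κ i ≤ lam i / κ :=
  div_le_div_of_nonneg_left (hpos i).le hκ (le_add_of_nonneg_left (hpos i).le)

theorem learnability_sub_sq (hpos : ∀ i, 0 < lam i) (hκ : 0 < κ) (i : ℕ) :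
    learnability lam κ i - learnability lam κ i ^ 2 = lam i * κ / (lam i + κ) ^ 2 := by
  have := (add_pos (hpos i) hκ).ne'
  rw [learnability]
  field_simp
  ring

theorem summable_learnability (hpos : ∀ i, 0 < lam i) (hκ : 0 < κ) (hs : Summable lam) :
    Summable (learnability lam κ) :=
  hs.div_const κ |>.of_nonneg_of_le (fun i => (learnability_pos hpos hκ i).le)
    (learnability_le_div hpos hκ)

theorem tsum_learnability_le (hpos : ∀ i, 0 < lam i) (hκ : 0 < κ) (hs : Summable lam) (m : ℕ) :
    ∑' i, learnability lam κ i ≤ m + tailSum lam m / κ := by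
  have h := tsum_le_natCast_add_tailSum (summable_learnability hpos hκ hs) (hs.div_const κ)
    (learnability_le_one hpos hκ) (learnability_le_div hpos hκ) m
  rwa [tailSum, tsum_div_const] at h

theorem div_le_tsum_learnability_sub_tsum_sq (hpos : ∀ i, 0 < lam i) (hanti : Antitone lam)
    (hκ : 0 < κ) (hs : Summable lam) (m : ℕ) :
    κ * tailSum lam m / (lam m + κ) ^ 2 ≤
      ∑' i, learnability lam κ i - ∑' i, learnability lam κ i ^ 2 := by
  have hL := summable_learnability hpos hκ hs
  have hL2 : Summable fun i => learnability lam κ i ^ 2 :=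
    hL.of_nonneg_of_le (fun _ => sq_nonneg _) fun i =>
      pow_le_of_le_one (learnability_pos hpos hκ i).le (learnability_le_one hpos hκ i) two_ne_zero
  have hD := hL.sub hL2
  have hterm : ∀ i, lam (m + i) * (κ / (lam m + κ) ^ 2) ≤
      learnability lam κ (m + i) - learnability lam κ (m + i) ^ 2 := by
    intro i
    have := hpos (m + i)
    rw [learnability_sub_sq hpos hκ, ← mul_div_assoc]
    gcongr
    exact hanti (Nat.le_add_right m i)
  calc κ * tailSum lam m / (lam m + κ) ^ 2 = ∑' i, lam (m + i) * (κ / (lam m + κ) ^ 2) := by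
        rw [(hs.nat_add_left m).tsum_mul_right, tailSum]
        ring
    _ ≤ ∑' i, (learnability lam κ (m + i) - learnability lam κ (m + i) ^ 2) :=
        ((hs.nat_add_left m).mul_right _).tsum_le_tsum hterm (hD.nat_add_left m)
    _ ≤ ∑' i, (learnability lam κ i - learnability lam κ i ^ 2) :=
        tsum_comp_le_tsum_of_inj hD (fun i => by have := hpos i; rw [learnability_sub_sq hpos hκ]; positivity)
          (add_right_injective m)
    _ = _ := hL.tsum_sub hL2

end Learnability

section Threshold

variable {lam : ℕ → ℝ} {κ ε : ℝ}

theorem mul_le_of_natCast_add_mul_effRank_le (hpos : ∀ i, 0 < lam i) (hκ : 0 < κ)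
    (hs : Summable lam) {j : ℕ} (hj : j + ε * effRank lam j ≤ ∑' i, learnability lam κ i) :
    ε * κ ≤ lam j := by
  have hn := tsum_learnability_le hpos hκ hs j
  have hT := tailSum_pos hpos hs j
  have h : ε * (tailSum lam j / lam j) ≤ tailSum lam j / κ := by rw [effRank] at hj; linarith
  rw [mul_div_assoc', div_le_div_iff₀ (hpos j) hκ] at h
  nlinarith

theorem one_le_mul_learnability (hκ : 0 < κ) (hε : 0 < ε) {i : ℕ} (h : ε * κ ≤ lam i) :
    1 ≤ (1 + ε⁻¹) * learnability lam κ i := by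
  have hlam : 0 < lam i := lt_of_lt_of_le (by positivity) h
  rw [learnability, mul_div_assoc', le_div_iff₀ (by positivity), one_mul, add_mul, one_mul,
    add_le_add_iff_left, inv_mul_eq_div, le_div_iff₀ hε, mul_comm]
  exact h

theorem tailSum_div_lt_tailSum_learnability (hpos : ∀ i, 0 < lam i) (hanti : Antitone lam)
    (hκ : 0 < κ) (hs : Summable lam) {k : ℕ} (hk : lam (k + 1) < lam k) :
    tailSum lam k / (lam k + κ) < tailSum (learnability lam κ) k := by
  rw [tailSum, ← tsum_div_const]
  refine Summable.tsum_lt_tsum (i := 1) (fun i => ?_) ?_ ((hs.nat_add_left k).div_const _)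
    ((summable_learnability hpos hκ hs).nat_add_left k)
  · exact div_le_div_of_nonneg_left (hpos _).le (add_pos (hpos _) hκ)
      (by linarith [hanti (Nat.le_add_right k i)])
  · exact div_lt_div_of_pos_left (hpos _) (add_pos (hpos _) hκ) (by linarith)

theorem natCast_add_effRank_lt (hpos : ∀ i, 0 < lam i) (hanti : Antitone lam) (hκ : 0 < κ)
    (hs : Summable lam) (hε : 0 < ε) {k : ℕ} (hk : ε * κ ≤ lam k) (hk1 : lam (k + 1) < lam k) :
    k + effRank lam k < (1 + ε⁻¹) * ∑' i, learnability lam κ i := by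
  rw [← sum_range_add_tailSum (summable_learnability hpos hκ hs) k, mul_add]
  have head : (k : ℝ) ≤ (1 + ε⁻¹) * ∑ i ∈ range k, learnability lam κ i := by
    rw [mul_sum]
    simpa using sum_le_sum fun i (hi : i ∈ range k) =>
      one_le_mul_learnability hκ hε (hk.trans (hanti (mem_range.1 hi).le))
  have tail : effRank lam k < (1 + ε⁻¹) * tailSum (learnability lam κ) k :=
    calc effRank lam k
        ≤ (1 + ε⁻¹) * learnability lam κ k * effRank lam k :=
          le_mul_of_one_le_left (div_pos (tailSum_pos hpos hs k) (hpos k)).le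
            (one_le_mul_learnability hκ hε hk)
      _ = (1 + ε⁻¹) * (tailSum lam k / (lam k + κ)) := by
          have := (hpos k).ne'
          have := (add_pos (hpos k) hκ).ne'
          rw [learnability, effRank]
          field_simp
      _ < (1 + ε⁻¹) * tailSum (learnability lam κ) k := by
          gcongr
          exact tailSum_div_lt_tailSum_learnability hpos hanti hκ hs hk1
  linarith

theorem tsum_learnability_div_le (hpos : ∀ i, 0 < lam i) (hanti : Antitone lam) (hκ : 0 < κ)
    (hs : Summable lam) (hε : 0 < ε) {k : ℕ} (hk : ε * κ ≤ lam k) (hk1 : lam (k + 1) ≤ ε * κ) :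
    (∑' i, learnability lam κ i) / (∑' i, learnability lam κ i - ∑' i, learnability lam κ i ^ 2)
      ≤ (1 + ε) ^ 2 * (lam k / lam (k + 1) + (1 / ε) * ((k : ℝ) + 1) / (effRank lam k - 1)) := by
  set t := tailSum lam (k + 1)
  set C := lam (k + 1) + κ
  have ht : 0 < t := tailSum_pos hpos hs _
  have hlamk := hpos k
  have hlamk1 := hpos (k + 1)
  have hN : ∑' i, learnability lam κ i ≤ (k + 1) + t / κ := by
    exact_mod_cast tsum_learnability_le hpos hκ hs (k + 1)
  have hS := div_le_tsum_learnability_sub_tsum_sq hpos hanti hκ hs (k + 1)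
  have hC : C / κ ≤ 1 + ε := by rw [div_le_iff₀ hκ]; linarith
  have hratio : 1 ≤ lam k / lam (k + 1) := (one_le_div hlamk1).2 (hanti k.le_succ)
  have hκt : (k + 1) * κ / t ≤ (1 / ε) * ((k : ℝ) + 1) / (t / lam k) :=
    calc (k + 1) * κ / t ≤ (k + 1) * (lam k / ε) / t := by gcongr; exact (le_div_iff₀' hε).2 hk
      _ = (1 / ε) * ((k : ℝ) + 1) / (t / lam k) := by field_simp
  rw [effRank_sub_one hs hlamk.ne']
  calc (∑' i, learnability lam κ i) / (∑' i, learnability lam κ i - ∑' i, learnability lam κ i ^ 2)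
      ≤ ((k + 1) + t / κ) / (κ * t / C ^ 2) :=
        div_le_div₀ (by positivity) hN (by positivity) hS
    _ = (C / κ) ^ 2 * (1 + (k + 1) * κ / t) := by field_simp; ring
    _ ≤ (1 + ε) ^ 2 * (lam k / lam (k + 1) + (1 / ε) * ((k : ℝ) + 1) / (t / lam k)) := by
        gcongr

end Threshold

theorem e0_tempered_upper_bound_general
    (n : ℕ)
    (lam : ℕ → ℝ) (hlam_pos : ∀ i, 0 < lam i) (hlam_mono : Antitone lam)
    (hlam_summable : Summable lam)
    (κ0 : ℝ) (hκ0 : 0 < κ0)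
    (hκ0_eq : ∑' i, lam i / (lam i + κ0) = (n : ℝ))
    (E0 : ℝ)
    (hE0 : E0 = (n : ℝ) / ((n : ℝ) - ∑' i, (lam i / (lam i + κ0)) ^ 2))
    (r : ℕ → ℝ) (hr : ∀ j, r j = (∑' i, lam (j + i)) / lam j)
    (ε : ℝ) (hε0 : 0 < ε)
    (kl ku : ℕ)
    (hkl_mem : (kl : ℝ) + ε * r kl ≤ n)
    (hku_mem : (1 + ε⁻¹) * n ≤ (ku : ℝ) + r ku) :
    (E0 : EReal) ≤ (((1 + ε) ^ 2 : ℝ) : EReal) *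
      (Finset.Ico kl ku).sup (fun k =>
        if 1 < r k then
          ((lam k / lam (k + 1) + (1 / ε) * ((k : ℝ) + 1) / (r k - 1) : ℝ) : EReal)
        else ⊤) := by
  obtain rfl : r = effRank lam := funext hr
  have hn : ∑' i, learnability lam κ0 i = n := hκ0_eq
  rw [← hn] at hkl_mem hku_mem
  obtain ⟨k, hkl_le, hk, hk1⟩ := exists_le_and_lt_succ_of_eventually_lt
    (mul_le_of_natCast_add_mul_effRank_le hlam_pos hκ0 hlam_summable hkl_mem)
    (hlam_summable.tendsto_atTop_zero.eventually_lt_const (by positivity))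
  have hk_lt : k < ku := by
    by_contra! hku_le
    have := monotone_natCast_add_effRank hlam_pos hlam_mono hlam_summable hku_le
    have := natCast_add_effRank_lt hlam_pos hlam_mono hκ0 hlam_summable hε0 hk (hk1.trans_le hk)
    linarith
  have hrk : 1 < effRank lam k := by
    rw [← sub_pos, effRank_sub_one hlam_summable (hlam_pos k).ne']
    exact div_pos (tailSum_pos hlam_pos hlam_summable _) (hlam_pos k)
  have hE : E0 ≤ (1 + ε) ^ 2 *
      (lam k / lam (k + 1) + (1 / ε) * ((k : ℝ) + 1) / (effRank lam k - 1)) := by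
    rw [hE0, ← hn]
    exact tsum_learnability_div_le hlam_pos hlam_mono hκ0 hlam_summable hε0 hk hk1.le
  calc (E0 : EReal)
      ≤ (((1 + ε) ^ 2 : ℝ) : EReal) *
          ((lam k / lam (k + 1) + (1 / ε) * ((k : ℝ) + 1) / (effRank lam k - 1) : ℝ) : EReal) := by
        exact_mod_cast hE
    _ ≤ _ := mul_le_mul_of_nonneg_left
        (le_sup_of_le (mem_Ico.2 ⟨hkl_le, hk_lt⟩) (by simp only [if_pos hrk, le_refl]))
        (EReal.coe_nonneg.2 (by positivity))

/-- Tempered bound: Assume all eigenvalues are positive. For any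
`0 < ε < n/r_0`, with `k_l = max{k : k + ε·r_k ≤ n}` and
`k_u = min{k : k + r_k ≥ (1 + ε⁻¹)·n}`,
`E_0 ≤ (1+ε)² · max_{k_l ≤ k < k_u} (λ_{k+1}/λ_{k+2} + (1/ε)·(k+1)/(r_k − 1))`,
where a term with `r_k ≤ 1` is interpreted as `+∞` (formalized in `EReal`).
(Here `lam i` denotes `λ_{i+1}`, so `λ_{k+1}/λ_{k+2} = lam k / lam (k+1)`.) -/
theorem e0_tempered_upper_bound
    (n : ℕ) (hn : 1 ≤ n)
    (lam : ℕ → ℝ) (hlam_pos : ∀ i, 0 < lam i) (hlam_mono : Antitone lam)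
    (hlam_summable : Summable lam)
    (κ0 : ℝ) (hκ0 : 0 < κ0)
    (hκ0_eq : ∑' i, lam i / (lam i + κ0) = (n : ℝ))
    (E0 : ℝ)
    (hE0 : E0 = (n : ℝ) / ((n : ℝ) - ∑' i, (lam i / (lam i + κ0)) ^ 2))
    (r : ℕ → ℝ) (hr : ∀ j, r j = (∑' i, lam (j + i)) / lam j)
    (ε : ℝ) (hε0 : 0 < ε) (hεn : ε < (n : ℝ) / r 0)
    (kl ku : ℕ)
    (hkl_mem : (kl : ℝ) + ε * r kl ≤ n)
    (hkl_max : ∀ j : ℕ, (j : ℝ) + ε * r j ≤ n → j ≤ kl)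
    (hku_mem : (1 + ε⁻¹) * n ≤ (ku : ℝ) + r ku)
    (hku_min : ∀ j : ℕ, (1 + ε⁻¹) * n ≤ (j : ℝ) + r j → ku ≤ j) :
    (E0 : EReal) ≤ (((1 + ε) ^ 2 : ℝ) : EReal) *
      (Finset.Ico kl ku).sup (fun k =>
        if 1 < r k then
          ((lam k / lam (k + 1) + (1 / ε) * ((k : ℝ) + 1) / (r k - 1) : ℝ) : EReal)
        else ⊤) :=
  e0_tempered_upper_bound_general n lam hlam_pos hlam_mono hlam_summable κ0 hκ0 hκ0_eq E0 hE0 r hr ε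
    hε0 kl ku hkl_mem hku_mem
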